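/- (Section 4, compatibility of partition data) Let 𝔭 = (F¹, …, F^r) be an ordered partition of I with r ≥ 2 and let 𝔮 = (F², …, F^r), an ordered partition of J = I ∖ F¹. Then for every i ∈ F¹ one has μ_{𝔭,i} = μ_i, and for every i ∈ J one has λ_{𝔮,i} = λ_{𝔭,i} and μ_{𝔮,i} = μ_{𝔭,i}, where the 𝔮-data are computed inside V' = span{λ_i : i ∈ J} from the basis (λ_i)_{i∈J} and its dual basis (μ'_i)_{i∈J} given by the orthogonal projections μ'_i of μ_i onto V'. -/

import Mathlib

open scoped Classical

noncomputable section

local notation "⟪" x ", " y "⟫" => @inner ℝ _ _ x y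

/-- An ordered partition of the finite set `ttl`: a finite sequence `F 0, …, F (r-1)` of
nonempty pairwise disjoint finsets whose union is `ttl`.  (We index the parts by `Fin r`,
so the `u`-th part of the paper, `1 ≤ u ≤ r`, is `F (u-1)`.) -/
structure OrderedPartition (I : Type*) [DecidableEq I] (ttl : Finset I) where
  r : ℕ
  F : Fin r → Finset I
  nonempty : ∀ u, (F u).Nonempty
  disj : ∀ u v : Fin r, u ≠ v → Disjoint (F u) (F v)
  covers : Finset.univ.biUnion F = ttl

namespace OrderedPartition

variable {V : Type*} [NormedAddCommGroup V] [InnerProductSpace ℝ V] [FiniteDimensional ℝ V]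
variable {I : Type*} [Fintype I] [DecidableEq I] {ttl : Finset I}

/-- `E^v = F¹ ∪ ⋯ ∪ F^v` (1-indexed `v`). -/
def Epart (p : OrderedPartition I ttl) (v : ℕ) : Finset I :=
  Finset.univ.biUnion fun u : Fin p.r => if (u : ℕ) < v then p.F u else ∅

/-- The (1-indexed) index `u` of the part `F^u` containing `i` (and `0` if `i` is in no part). -/
def partIdx (p : OrderedPartition I ttl) (i : I) : ℕ :=
  ∑ u : Fin p.r, if i ∈ p.F u then (u : ℕ) + 1 else 0

/-- `U^v`, the span of `{μ_i : i ∈ E^v}`. -/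
def Uspace (p : OrderedPartition I ttl) (mu : I → V) (v : ℕ) : Submodule ℝ V :=
  Submodule.span ℝ (mu '' ↑(p.Epart v))

/-- `W^u` (1-indexed `u`), the orthogonal complement of `U^{u-1}` in `U^u`. -/
def Wspace (p : OrderedPartition I ttl) (mu : I → V) (u : ℕ) : Submodule ℝ V :=
  p.Uspace mu u ⊓ (p.Uspace mu (u - 1))ᗮ

/-- `λ_{𝔭,i}`, the orthogonal projection of `λ_i` onto `W^u` for `i ∈ F^u`. -/
def lamp (p : OrderedPartition I ttl) (lam mu : I → V) (i : I) : V :=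
  (Submodule.orthogonalProjectionOnto (p.Wspace mu (p.partIdx i)) (lam i) : V)

/-- `μ_{𝔭,i}`, the orthogonal projection of `μ_i` onto `W^u` for `i ∈ F^u`. -/
def mup (p : OrderedPartition I ttl) (mu : I → V) (i : I) : V :=
  (Submodule.orthogonalProjectionOnto (p.Wspace mu (p.partIdx i)) (mu i) : V)

/-- The characteristic function `φ_𝔭^Λ(H)`. -/
def phi (p : OrderedPartition I ttl) (lam mu : I → V) (Λ H : V) : ℤ :=
  if ∀ i ∈ ttl,
      (0 < ⟪p.mup mu i, Λ⟫ → ⟪p.lamp lam mu i, H⟫ ≤ 0) ∧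
      (⟪p.mup mu i, Λ⟫ ≤ 0 → 0 < ⟪p.lamp lam mu i, H⟫)
  then 1 else 0

/-- The characteristic function `ψ_𝔭^Λ(H)`. -/
def psi (p : OrderedPartition I ttl) (lam mu : I → V) (Λ H : V) : ℤ :=
  if ∀ i ∈ ttl,
      (p.partIdx i = 1 → 0 < ⟪p.lamp lam mu i, H⟫) ∧
      (p.partIdx i ≠ 1 →
        (0 < ⟪p.mup mu i, Λ⟫ → ⟪p.lamp lam mu i, H⟫ ≤ 0) ∧
        (⟪p.mup mu i, Λ⟫ ≤ 0 → 0 < ⟪p.lamp lam mu i, H⟫))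
  then 1 else 0

/-- `b_𝔭^Λ = #{i : ⟪μ_{𝔭,i}, Λ⟫ ≤ 0}`. -/
def bpart (p : OrderedPartition I ttl) (mu : I → V) (Λ : V) : ℕ :=
  (ttl.filter fun i => ⟪p.mup mu i, Λ⟫ ≤ 0).card

/-- `c_𝔭^Λ = #{i ∉ F¹ : ⟪μ_{𝔭,i}, Λ⟫ ≤ 0}`. -/
def cpart (p : OrderedPartition I ttl) (mu : I → V) (Λ : V) : ℕ :=
  (ttl.filter fun i => p.partIdx i ≠ 1 ∧ ⟪p.mup mu i, Λ⟫ ≤ 0).card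

/-- `α_𝔭^Λ = b_𝔭^Λ + Σ_{u=1}^{r} (a^u + 1)`. -/
def alphaP (p : OrderedPartition I ttl) (mu : I → V) (Λ : V) : ℕ :=
  p.bpart mu Λ + ∑ u : Fin p.r, ((p.F u).card + 1)

/-- `β_𝔭^Λ = 1 + c_𝔭^Λ + Σ_{u=2}^{r} (a^u + 1)`. -/
def betaP (p : OrderedPartition I ttl) (mu : I → V) (Λ : V) : ℕ :=
  1 + p.cpart mu Λ + ∑ u : Fin p.r, if 1 ≤ (u : ℕ) then (p.F u).card + 1 else 0

end OrderedPartition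

/-- `μ'_i`, the orthogonal projection of `μ_i` onto `V' = span{λ_j : j ∈ J}`; for `i ∈ J` these
form the basis of `V'` dual to `(λ_i)_{i∈J}`. -/
noncomputable def muSub {V : Type*} [NormedAddCommGroup V] [InnerProductSpace ℝ V]
    [FiniteDimensional ℝ V] {I : Type*} (lam mu : I → V) (J : Finset I) (i : I) : V :=
  (Submodule.orthogonalProjectionOnto (Submodule.span ℝ (lam '' ↑J)) (mu i) : V)


/-! ### Auxiliary lemmas -/

section AuxLemmas

variable {V : Type*} [NormedAddCommGroup V] [InnerProductSpace ℝ V] [FiniteDimensional ℝ V]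

lemma mem_orthogonal_span' {s : Set V} {x : V} (h : ∀ y ∈ s, ⟪y, x⟫ = 0) :
    x ∈ (Submodule.span ℝ s)ᗮ := by
  rw [Submodule.mem_orthogonal]
  intro u hu
  induction hu using Submodule.span_induction with
  | mem y hy => exact h y hy
  | zero => simp
  | add a b _ _ ha hb => simp [inner_add_left, ha, hb]
  | smul c a _ ha => simp [inner_smul_left, ha]

lemma proj_congr' {K L : Submodule ℝ V} (h : K = L) (x : V) :
    ((Submodule.orthogonalProjectionOnto K x : K) : V) = ((Submodule.orthogonalProjectionOnto L x : L) : V) := by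
  subst h; rfl

lemma proj_eq_zero_of_mem_orthogonal' {K : Submodule ℝ V} {x : V} (hx : x ∈ Kᗮ) :
    ((Submodule.orthogonalProjectionOnto K x : K) : V) = 0 := by
  rw [Submodule.orthogonalProjectionOnto_apply_of_mem_orthogonal hx]
  rfl

lemma inf_orth_trick {U B C : Submodule ℝ V} (hUB : U ≤ B) :
    (C ⊓ Uᗮ) ⊓ (B ⊓ Uᗮ)ᗮ = C ⊓ Bᗮ := by
  have hB : U ⊔ Uᗮ ⊓ B = B := Submodule.sup_orthogonal_inf_of_hasOrthogonalProjection hUB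
  apply le_antisymm
  · intro x hx
    simp only [Submodule.mem_inf] at hx ⊢
    obtain ⟨⟨hxC, hxU⟩, hxBU⟩ := hx
    refine ⟨hxC, ?_⟩
    rw [← hB, ← Submodule.inf_orthogonal]
    exact Submodule.mem_inf.mpr ⟨hxU, by rwa [inf_comm] at hxBU⟩
  · intro x hx
    simp only [Submodule.mem_inf] at hx ⊢
    obtain ⟨hxC, hxB⟩ := hx
    exact ⟨⟨hxC, Submodule.orthogonal_le hUB hxB⟩,
      Submodule.orthogonal_le inf_le_left hxB⟩

end AuxLemmas

namespace OrderedPartition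

variable {I : Type*} [Fintype I] [DecidableEq I] {ttl : Finset I}

lemma mem_Epart (p : OrderedPartition I ttl) (v : ℕ) (i : I) :
    i ∈ p.Epart v ↔ ∃ u : Fin p.r, (u : ℕ) < v ∧ i ∈ p.F u := by
  unfold Epart
  simp only [Finset.mem_biUnion, Finset.mem_univ, true_and]
  constructor
  · rintro ⟨u, hu⟩
    by_cases h : (u : ℕ) < v
    · exact ⟨u, h, by simpa [h] using hu⟩
    · simp [h] at hu
  · rintro ⟨u, h1, h2⟩
    exact ⟨u, by simp [h1, h2]⟩

lemma Epart_mono (p : OrderedPartition I ttl) {v w : ℕ} (h : v ≤ w) :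
    p.Epart v ⊆ p.Epart w := by
  intro i hi
  rw [p.mem_Epart] at *
  obtain ⟨u, h1, h2⟩ := hi
  exact ⟨u, by omega, h2⟩

lemma partIdx_eq (p : OrderedPartition I ttl) {u : Fin p.r} {i : I}
    (hi : i ∈ p.F u) : p.partIdx i = (u : ℕ) + 1 := by
  unfold partIdx
  rw [Finset.sum_eq_single u]
  · simp [hi]
  · intro v _ hv
    have : i ∉ p.F v := fun h => Finset.disjoint_left.mp (p.disj v u hv) h hi
    simp [this]
  · intro h
    exact absurd (Finset.mem_univ u) h

end OrderedPartition

/-- Section 4, compatibility of partition data: if `𝔭 = (F¹, …, F^r)` is an ordered partition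
of `I` with `r ≥ 2` and `𝔮 = (F², …, F^r)` is the induced ordered partition of `J = I ∖ F¹`
(with its data computed inside `V' = span{λ_i : i ∈ J}` from the basis `(λ_i)_{i∈J}` and its
dual basis `(μ'_i)_{i∈J}`), then `μ_{𝔭,i} = μ_i` for `i ∈ F¹`, and `λ_{𝔮,i} = λ_{𝔭,i}`,
`μ_{𝔮,i} = μ_{𝔭,i}` for `i ∈ J`. -/
theorem tail_partition_compatibility
    {V : Type*} [NormedAddCommGroup V] [InnerProductSpace ℝ V] [FiniteDimensional ℝ V]
    {I : Type*} [Fintype I] [DecidableEq I] [Nonempty I]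
    (b : Module.Basis I ℝ V) (mu : I → V)
    (hmu : ∀ i j : I, ⟪mu i, b j⟫ = if i = j then 1 else 0)
    (p : OrderedPartition I (Finset.univ : Finset I)) (hr2 : 2 ≤ p.r)
    (J : Finset I) (hJ : J = Finset.univ \ p.F ⟨0, by omega⟩)
    (q : OrderedPartition I J) (hqr : q.r + 1 = p.r)
    (hqF : ∀ v : Fin q.r, q.F v = p.F ⟨(v : ℕ) + 1, by have := v.isLt; omega⟩) :
    (∀ i ∈ p.F ⟨0, by omega⟩, p.mup mu i = mu i)
    ∧ ∀ i ∈ J,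
        q.lamp (⇑b) (muSub (⇑b) mu J) i = p.lamp (⇑b) mu i
        ∧ q.mup (muSub (⇑b) mu J) i = p.mup mu i := by
  classical
  have hr0 : 0 < p.r := by omega
  set U1 : Submodule ℝ V := p.Uspace mu 1 with hU1def
  have hE1 : p.Epart 1 = p.F ⟨0, hr0⟩ := by
    ext i
    rw [p.mem_Epart]
    constructor
    · rintro ⟨u, hu, hi⟩
      have hu0 : u = ⟨0, hr0⟩ := by
        apply Fin.ext
        simp only [Fin.val_mk]
        omega
      rwa [hu0] at hi
    · intro hi
      exact ⟨⟨0, hr0⟩, by norm_num, hi⟩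
  have hE0 : p.Epart 0 = ∅ := by
    ext i
    simp [p.mem_Epart]
  have hU0 : p.Uspace mu 0 = ⊥ := by
    simp [OrderedPartition.Uspace, hE0]
  have hmuU1 : ∀ i ∈ p.F ⟨0, hr0⟩, mu i ∈ U1 := by
    intro i hi
    exact Submodule.subset_span ⟨i, by rw [hE1]; exact hi, rfl⟩
  have part1 : ∀ i ∈ p.F ⟨0, hr0⟩, p.mup mu i = mu i := by
    intro i hi
    have hpi : p.partIdx i = 1 := p.partIdx_eq hi
    unfold OrderedPartition.mup
    have hW : p.Wspace mu (p.partIdx i) = U1 := by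
      rw [hpi]
      unfold OrderedPartition.Wspace
      rw [show (1 : ℕ) - 1 = 0 from rfl, hU0]
      simp [hU1def]
    rw [proj_congr' hW]
    exact Submodule.starProjection_eq_self_iff.mpr (hmuU1 i hi)
  have hrepr : ∀ (x : V) (j : I), ⟪mu j, x⟫ = b.repr x j := by
    intro x j
    conv_lhs => rw [← b.sum_repr x]
    simp [inner_sum, real_inner_smul_right, hmu, -Module.Basis.sum_repr]
  have hVspan : Submodule.span ℝ (⇑b '' ↑J) = U1ᗮ := by
    apply le_antisymm
    · rw [Submodule.span_le]
      rintro _ ⟨j, hj, rfl⟩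
      refine SetLike.mem_coe.mpr ?_
      rw [hU1def, OrderedPartition.Uspace]
      apply mem_orthogonal_span'
      rintro _ ⟨k, hk, rfl⟩
      have hkF : k ∈ p.F ⟨0, hr0⟩ := by
        rw [← hE1]; exact hk
      have hjJ : j ∈ J := hj
      have hkj : k ≠ j := by
        intro h
        rw [hJ] at hjJ
        simp only [Finset.mem_sdiff, Finset.mem_univ, true_and] at hjJ
        exact hjJ (h ▸ hkF)
      rw [hmu k j, if_neg hkj]
    · intro x hx
      rw [Submodule.mem_orthogonal] at hx
      have hx0 : ∀ j ∈ p.F ⟨0, hr0⟩, b.repr x j = 0 := by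
        intro j hj
        rw [← hrepr]
        exact hx _ (hmuU1 j hj)
      have hxe : x = ∑ j ∈ J, b.repr x j • b j := by
        conv_lhs => rw [← b.sum_repr x]
        symm
        apply Finset.sum_subset (Finset.subset_univ J)
        intro j _ hjJ
        have hjF : j ∈ p.F ⟨0, hr0⟩ := by
          rw [hJ] at hjJ
          simpa using hjJ
        rw [hx0 j hjF, zero_smul]
      rw [hxe]
      exact Submodule.sum_mem _ fun j hj =>
        Submodule.smul_mem _ _ (Submodule.subset_span ⟨j, hj, rfl⟩)
  have hVspan' : (Submodule.span ℝ (⇑b '' ↑J))ᗮ = U1 := by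
    rw [hVspan, Submodule.orthogonal_orthogonal]
  have hmu'def : ∀ i, muSub (⇑b) mu J i
      = mu i - (Submodule.orthogonalProjectionOnto U1 (mu i) : V) := by
    intro i
    unfold muSub
    rw [proj_congr' hVspan]
    exact Submodule.starProjection_orthogonal_val _
  have hmu'mem : ∀ i, muSub (⇑b) mu J i ∈ U1ᗮ := by
    intro i
    unfold muSub
    rw [← hVspan]
    exact Submodule.coe_mem _
  have hmu'zero : ∀ i ∈ p.F ⟨0, hr0⟩, muSub (⇑b) mu J i = 0 := by
    intro i hi
    unfold muSub
    apply proj_eq_zero_of_mem_orthogonal'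
    rw [hVspan']
    exact hmuU1 i hi
  have hUmono : ∀ {v w : ℕ}, v ≤ w → p.Uspace mu v ≤ p.Uspace mu w := by
    intro v w h
    exact Submodule.span_mono (Set.image_mono (Finset.coe_subset.mpr (p.Epart_mono h)))
  have hU1le : ∀ v : ℕ, U1 ≤ p.Uspace mu (v + 1) := fun v => hUmono (by omega)
  have hqE : ∀ (v : ℕ) (i : I), i ∈ q.Epart v → i ∈ p.Epart (v + 1) := by
    intro v i hi
    rw [q.mem_Epart] at hi
    obtain ⟨u, hu, hiF⟩ := hi
    rw [hqF u] at hiF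
    have hur : (u : ℕ) < q.r := u.isLt
    rw [p.mem_Epart]
    exact ⟨⟨(u : ℕ) + 1, by omega⟩, by simp only [Fin.val_mk]; omega, hiF⟩
  have hqE' : ∀ (v : ℕ) (i : I), i ∈ p.Epart (v + 1) → i ∉ p.F ⟨0, hr0⟩ →
      i ∈ q.Epart v := by
    intro v i hi hiA
    rw [p.mem_Epart] at hi
    obtain ⟨u, hu, hiF⟩ := hi
    have hu0 : (u : ℕ) ≠ 0 := by
      intro h
      exact hiA (by rwa [show u = ⟨0, hr0⟩ from Fin.ext h] at hiF)
    have hur : (u : ℕ) < p.r := u.isLt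
    rw [q.mem_Epart]
    refine ⟨⟨(u : ℕ) - 1, by omega⟩, by simp only [Fin.val_mk]; omega, ?_⟩
    rw [hqF]
    have he : (⟨((⟨(u : ℕ) - 1, by omega⟩ : Fin q.r) : ℕ) + 1,
        by simp; omega⟩ : Fin p.r) = u := Fin.ext (by simp; omega)
    rwa [he]
  have hL1 : ∀ v : ℕ, q.Uspace (muSub (⇑b) mu J) v = p.Uspace mu (v + 1) ⊓ U1ᗮ := by
    intro v
    apply le_antisymm
    · rw [OrderedPartition.Uspace, Submodule.span_le]
      rintro _ ⟨i, hi, rfl⟩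
      refine SetLike.mem_coe.mpr (Submodule.mem_inf.mpr ⟨?_, hmu'mem i⟩)
      rw [hmu'def]
      have h1 : mu i ∈ p.Uspace mu (v + 1) :=
        Submodule.subset_span ⟨i, hqE v i hi, rfl⟩
      have h2 : (Submodule.orthogonalProjectionOnto U1 (mu i) : V) ∈ p.Uspace mu (v + 1) :=
        hU1le v (Submodule.coe_mem _)
      exact Submodule.sub_mem _ h1 h2
    · intro x hx
      rw [Submodule.mem_inf] at hx
      obtain ⟨hx1, hx2⟩ := hx
      have hxV : x ∈ Submodule.span ℝ (⇑b '' ↑J) := by rw [hVspan]; exact hx2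
      set P : V →ₗ[ℝ] V := (Submodule.span ℝ (⇑b '' ↑J)).subtype ∘ₗ
        (Submodule.orthogonalProjectionOnto (Submodule.span ℝ (⇑b '' ↑J))).toLinearMap with hP
      have hPx : P x = x := by
        show ((Submodule.orthogonalProjectionOnto (Submodule.span ℝ (⇑b '' ↑J)) x : _) : V) = x
        exact Submodule.starProjection_eq_self_iff.mpr hxV
      have hmem : P x ∈ Submodule.span ℝ (P '' (mu '' ↑(p.Epart (v + 1)))) :=
        Submodule.apply_mem_span_image_of_mem_span P hx1
      rw [hPx] at hmem
      refine Submodule.span_le.mpr ?_ hmem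
      rintro _ ⟨_, ⟨i, hi, rfl⟩, rfl⟩
      have hPmu : P (mu i) = muSub (⇑b) mu J i := rfl
      rw [hPmu]
      by_cases hiA : i ∈ p.F ⟨0, hr0⟩
      · rw [hmu'zero i hiA]
        exact SetLike.mem_coe.mpr (Submodule.zero_mem _)
      · exact SetLike.mem_coe.mpr
          (Submodule.subset_span ⟨i, hqE' v i hi hiA, rfl⟩)
  refine ⟨part1, ?_⟩
  intro i hiJ
  have hcov : i ∈ Finset.univ.biUnion q.F := by rw [q.covers]; exact hiJ
  obtain ⟨v, -, hiv⟩ := Finset.mem_biUnion.mp hcov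
  have hvr : (v : ℕ) < q.r := v.isLt
  have hip : i ∈ p.F ⟨(v : ℕ) + 1, by omega⟩ := by rw [← hqF]; exact hiv
  have hqidx : q.partIdx i = (v : ℕ) + 1 := q.partIdx_eq hiv
  have hpidx : p.partIdx i = (v : ℕ) + 2 := by
    rw [p.partIdx_eq hip]
  have hW : q.Wspace (muSub (⇑b) mu J) ((v : ℕ) + 1) = p.Wspace mu ((v : ℕ) + 2) := by
    unfold OrderedPartition.Wspace
    have h1 : (v : ℕ) + 1 - 1 = (v : ℕ) := by omega
    have h2 : (v : ℕ) + 2 - 1 = (v : ℕ) + 1 := by omega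
    have h3 : (v : ℕ) + 2 = (v : ℕ) + 1 + 1 := by omega
    rw [h1, h2, h3, hL1 ((v : ℕ) + 1), hL1 (v : ℕ)]
    exact inf_orth_trick (hU1le _)
  have hW' : q.Wspace (muSub (⇑b) mu J) (q.partIdx i) = p.Wspace mu (p.partIdx i) := by
    rw [hqidx, hpidx]; exact hW
  constructor
  · unfold OrderedPartition.lamp
    rw [proj_congr' hW']
  · unfold OrderedPartition.mup
    rw [proj_congr' hW', hmu'def i]
    rw [proj_congr' (show p.Wspace mu (p.partIdx i) = p.Wspace mu ((v : ℕ) + 2) from by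
      rw [hpidx])]
    rw [map_sub]
    have hz : ((Submodule.orthogonalProjectionOnto (p.Wspace mu ((v : ℕ) + 2))
        ((Submodule.orthogonalProjectionOnto U1 (mu i) : V)) : _) : V) = 0 := by
      apply proj_eq_zero_of_mem_orthogonal'
      have hWle : p.Wspace mu ((v : ℕ) + 2) ≤ U1ᗮ := by
        unfold OrderedPartition.Wspace
        refine inf_le_right.trans (Submodule.orthogonal_le ?_)
        rw [show (v : ℕ) + 2 - 1 = (v : ℕ) + 1 from by omega]
        exact hU1le _
      exact Submodule.orthogonal_le hWle
        (U1.le_orthogonal_orthogonal (Submodule.coe_mem _))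
    rw [Submodule.coe_sub, hz, sub_zero]
    exact proj_congr' (show p.Wspace mu ((v : ℕ) + 2) = p.Wspace mu (p.partIdx i) from by
      rw [hpidx]) _
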